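/- Let g be the free pre-Lie algebra of rooted trees decorated by J ⊆ ℕ* (with pre-Lie product t ∘ t' = sum of all graftings of t onto vertices of t') and φ: g → g_FdB the unique pre-Lie morphism sending the single-vertex tree •_j to e_j, where g_FdB has product e_i∘e_j = (λj−μ)e_{i+j}. Then for every decorated rooted tree t, φ(t) = μ_t e_{|t|} for some scalar μ_t, where |t| is the sum of the decorations of the vertices of t, and μ_t satisfies: μ_{•_j} = 1, and if t = B_j(t_1⋯t_m) then μ_t = μ_{t_1}⋯μ_{t_m} · (λj−μ)(λj)(λj+μ)⋯(λj+(m−2)μ). -/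

import Mathlib

/-- Rooted trees with vertices decorated by `D` (a root decoration and a list of subtrees). -/
inductive RT (D : Type*) : Type _
  | node : D → List (RT D) → RT D

namespace RT

variable {D : Type*}

mutual
  /-- The degree of a decorated rooted tree: the sum of the (positive integer) degrees of
  the decorations of its vertices. -/
  def degN (w : D → ℕ+) : RT D → ℕ
    | .node j c => (w j : ℕ) + degListN w c
  /-- Sum of degrees of a list of trees. -/
  def degListN (w : D → ℕ+) : List (RT D) → ℕ
    | [] => 0
    | t :: ts => degN w t + degListN w ts
end

theorem degN_pos (w : D → ℕ+) : ∀ t : RT D, 0 < degN w t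
  | .node j c => by
      rw [degN]
      exact Nat.lt_of_lt_of_le (w j).2 (Nat.le_add_right _ _)

/-- The degree of a decorated rooted tree, as a positive integer. -/
def deg (w : D → ℕ+) (t : RT D) : ℕ+ := ⟨degN w t, degN_pos w t⟩

mutual
  /-- The list of all graftings of the tree `t` on the vertices of the tree `s`. -/
  def graftings (t : RT D) : RT D → List (RT D)
    | .node j c => RT.node j (t :: c) :: (graftingsList t c).map fun c' => RT.node j c'
  /-- All ways to graft `t` on a vertex of one of the trees of a list (forest). -/
  def graftingsList (t : RT D) : List (RT D) → List (List (RT D))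
    | [] => []
    | s :: rest => ((graftings t s).map fun s' => s' :: rest) ++
        ((graftingsList t rest).map fun rest' => s :: rest')
end

end RT

/-- The pre-Lie product of the free pre-Lie algebra `g_CK^J` on rooted trees decorated by `J`
(`t ∘ t' = Σ` of all graftings of `t` on the vertices of `t'`), extended bilinearly to the span
of trees. -/
noncomputable def gprod {D : Type*} (K : Type*) [Field K] (x y : RT D →₀ K) : RT D →₀ K :=
  x.sum fun t a => y.sum fun s b =>
    (a * b) • ((RT.graftings t s).map fun u => Finsupp.single u (1 : K)).sum

/-- The Faà di Bruno pre-Lie algebra: basis `(e_i)_{i≥1}`, product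
`e_i ∘ e_j = (λ j − μ) e_{i+j}`. -/
noncomputable def fdbMul (K : Type*) [Field K] (lam mu : K) (x y : ℕ+ →₀ K) : ℕ+ →₀ K :=
  x.sum fun i a => y.sum fun j b => Finsupp.single (i + j) (a * b * (lam * ((j : ℕ) : K) - mu))

/-!
The scalar `μ_t` is given by the recursion of the statement (`fdbCoeff`). Its key property is
compatibility with grafting: summing `μ` over all graftings of `t` on `s` gives
`μ_t μ_s (λ|s| − μ)`, which is exactly the coefficient of
`φ(t) ∘ φ(s) = μ_t μ_s e_{|t|} ∘ e_{|s|}`.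
Since `t ∘ B_j(c) = B_j(t c) + Σ B_j(c')`, with `c'` running over the graftings of `t` on the
forest `c`, the morphism property determines `φ(B_j(t c))` from trees that are smaller for the
lexicographic order on (degree, number of children of the root), and the claim follows by
induction on that order.
-/

namespace RT

variable {D : Type*}

def rootArity : RT D → ℕ
  | .node _ c => c.length

theorem deg_node_nil (w : D → ℕ+) (d : D) : deg w (node d []) = w d := rfl

mutual
theorem degN_of_mem_graftings (w : D → ℕ+) (t : RT D) :
    ∀ s u, u ∈ graftings t s → degN w u = degN w t + degN w s
  | .node j c, u, hu => by
      rw [graftings] at hu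
      rcases List.mem_cons.mp hu with rfl | hu
      · simp only [degN, degListN]; omega
      · obtain ⟨c', hc', rfl⟩ := List.mem_map.mp hu
        have := degListN_of_mem_graftingsList w t c c' hc'
        simp only [degN]; omega

theorem degListN_of_mem_graftingsList (w : D → ℕ+) (t : RT D) :
    ∀ c c', c' ∈ graftingsList t c → degListN w c' = degN w t + degListN w c
  | s :: rest, c', h => by
      rw [graftingsList] at h
      rcases List.mem_append.mp h with h | h
      · obtain ⟨u, hu, rfl⟩ := List.mem_map.mp h
        have := degN_of_mem_graftings w t s u hu
        simp only [degListN]; omega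
      · obtain ⟨r, hr, rfl⟩ := List.mem_map.mp h
        have := degListN_of_mem_graftingsList w t rest r hr
        simp only [degListN]; omega
end

theorem deg_of_mem_graftings (w : D → ℕ+) {t s u : RT D} (hu : u ∈ graftings t s) :
    deg w u = deg w t + deg w s :=
  PNat.eq (degN_of_mem_graftings w t s u hu)

theorem length_of_mem_graftingsList (t : RT D) :
    ∀ c c', c' ∈ graftingsList t c → c'.length = c.length
  | s :: rest, c', h => by
      rw [graftingsList] at h
      rcases List.mem_append.mp h with h | h
      · obtain ⟨u, _, rfl⟩ := List.mem_map.mp h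
        rfl
      · obtain ⟨r, hr, rfl⟩ := List.mem_map.mp h
        simp [length_of_mem_graftingsList t rest r hr]

end RT

open RT Finsupp

section Coefficient

variable {D K : Type*} [Field K] (lam mu : K) (w : D → ℕ+)

noncomputable def rootFactor (x : K) (m : ℕ) : K :=
  ∏ k ∈ Finset.range m, (lam * x + ((k : K) - 1) * mu)

noncomputable def fdbCoeff : RT D → K
  | .node j c => (c.map fun t => fdbCoeff t).prod * rootFactor lam mu ((w j : ℕ) : K) c.length

mutual
theorem sum_fdbCoeff_graftings (t : RT D) : ∀ s : RT D,
    ((graftings t s).map (fdbCoeff lam mu w)).sum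
      = fdbCoeff lam mu w t * fdbCoeff lam mu w s * (lam * (degN w s : K) - mu)
  | .node j c => by
      have hlist := sum_prod_fdbCoeff_graftingsList t c
      have hlen : ∀ c' ∈ graftingsList t c, c'.length = c.length :=
        length_of_mem_graftingsList t c
      rw [graftings, List.map_cons, List.sum_cons, List.map_map]
      rw [List.map_congr_left (fun c' hc' => by
        rw [Function.comp_apply, fdbCoeff, hlen c' hc']), List.sum_map_mul_right, hlist]
      simp only [fdbCoeff, List.map_cons, List.prod_cons, List.length_cons, rootFactor,
        Finset.prod_range_succ, degN]
      push_cast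
      ring

theorem sum_prod_fdbCoeff_graftingsList (t : RT D) : ∀ c : List (RT D),
    ((graftingsList t c).map fun c' => (c'.map (fdbCoeff lam mu w)).prod).sum
      = fdbCoeff lam mu w t * (c.map (fdbCoeff lam mu w)).prod
          * (lam * (degListN w c : K) - c.length * mu)
  | [] => by simp [graftingsList, degListN]
  | s :: rest => by
      have hhead := sum_fdbCoeff_graftings t s
      have htail := sum_prod_fdbCoeff_graftingsList t rest
      simp only [graftingsList, List.map_append, List.map_map, List.sum_append,
        Function.comp_def, List.map_cons, List.prod_cons, List.sum_map_mul_right,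
        List.sum_map_mul_left, hhead, htail, degListN, List.length_cons]
      push_cast
      ring
end

end Coefficient

section Morphism

variable {D K : Type*} [Field K]

theorem gprod_single_single (t s : RT D) :
    gprod K (single t 1) (single s 1) = ((graftings t s).map fun u => single u (1 : K)).sum := by
  simp [gprod, sum_single_index]

theorem fdbMul_single_single (lam mu : K) (i j : ℕ+) (a b : K) :
    fdbMul K lam mu (single i a) (single j b)
      = single (i + j) (a * b * (lam * ((j : ℕ) : K) - mu)) := by
  simp [fdbMul, sum_single_index]

variable {lam mu : K} {w : D → ℕ+} {φ : (RT D →₀ K) →ₗ[K] (ℕ+ →₀ K)}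

theorem map_single_eq_single_fdbCoeff
    (hgen : ∀ d, φ (single (node d []) 1) = single (w d) 1)
    (hmor : ∀ x y, φ (gprod K x y) = fdbMul K lam mu (φ x) (φ y)) :
    ∀ t, φ (single t 1) = single (deg w t) (fdbCoeff lam mu w t)
  | .node d [] => by simp [hgen, fdbCoeff, rootFactor, deg_node_nil]
  | .node d (t₀ :: c) => by
      set s := node d c
      set T := node d (t₀ :: c)
      set e := deg w t₀ + deg w s
      have hsplit : graftings t₀ s = T :: (graftingsList t₀ c).map (node d) := by
        simp only [s, T, graftings]
      have hdeg : ∀ u ∈ graftings t₀ s, deg w u = e := fun u hu => deg_of_mem_graftings w hu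
      have hφ : ((graftings t₀ s).map fun u => φ (single u 1)).sum = single e
          (fdbCoeff lam mu w t₀ * fdbCoeff lam mu w s * (lam * (degN w s : K) - mu)) := by
        have := hmor (single t₀ 1) (single s 1)
        rwa [gprod_single_single, map_list_sum, List.map_map,
          map_single_eq_single_fdbCoeff hgen hmor t₀, map_single_eq_single_fdbCoeff hgen hmor s,
          fdbMul_single_single] at this
      have hcoeff : ((graftings t₀ s).map fun u => single e (fdbCoeff lam mu w u)).sum = single e
          (fdbCoeff lam mu w t₀ * fdbCoeff lam mu w s * (lam * (degN w s : K) - mu)) := by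
        rw [← sum_fdbCoeff_graftings, ← singleAddHom_apply, map_list_sum, List.map_map]
        rfl
      have htail : ∀ c' ∈ graftingsList t₀ c,
          φ (single (node d c') 1) = single e (fdbCoeff lam mu w (node d c')) := by
        intro c' hc'
        rw [map_single_eq_single_fdbCoeff hgen hmor (node d c'), hdeg]
        rw [hsplit]
        exact List.mem_cons_of_mem _ (List.mem_map_of_mem hc')
      have h := hφ.trans hcoeff.symm
      simp only [hsplit, List.map_cons, List.sum_cons, List.map_map, Function.comp_def] at h
      rw [List.map_congr_left htail] at h
      rw [add_right_cancel h, hdeg T (hsplit ▸ List.mem_cons_self)]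
termination_by t => (degN w t, t.rootArity)
decreasing_by
  all_goals simp only [Prod.lex_def, rootArity, degN, degListN, List.length_cons]
  · have := degN_pos w t₀; omega
  · have := (w d).pos; omega
  · rw [degListN_of_mem_graftingsList w t₀ c c' hc', length_of_mem_graftingsList t₀ c c' hc']
    omega

end Morphism

/-- Let `g_CK^J` be the free pre-Lie algebra of rooted trees decorated by `J ⊆ ℕ*` and
`φ : g_CK^J → g_FdB` the unique pre-Lie morphism sending `•_j` to `e_j`, where
`e_i ∘ e_j = (λj−μ) e_{i+j}`. Then for every decorated rooted tree `t`,
`φ(t) = μ_t e_{|t|}` for some scalar `μ_t`, where `|t|` is the sum of the decorations of the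
vertices of `t`, and `μ_t` satisfies: `μ_{•_j} = 1`, and if `t = B_j(t_1⋯t_m)` then
`μ_t = μ_{t_1}⋯μ_{t_m} · (λj−μ)(λj)(λj+μ)⋯(λj+(m−2)μ)`. -/
theorem phi_tree_eq_scalar_smul_basis (K : Type*) [Field K] [CharZero K] (lam mu : K)
    (J : Set ℕ+)
    (φ : (RT J →₀ K) →ₗ[K] (ℕ+ →₀ K))
    (hgen : ∀ j : J, φ (Finsupp.single (RT.node j []) 1) = Finsupp.single (j : ℕ+) 1)
    (hmor : ∀ x y : RT J →₀ K, φ (gprod K x y) = fdbMul K lam mu (φ x) (φ y)) :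
    ∃ M : RT J → K,
      (∀ j : J, M (RT.node j []) = 1) ∧
      (∀ (j : J) (c : List (RT J)), M (RT.node j c) =
        (c.map M).prod *
          ∏ k ∈ Finset.range c.length,
            (lam * (((j : ℕ+) : ℕ) : K) + ((k : K) - 1) * mu)) ∧
      (∀ t : RT J, φ (Finsupp.single t 1) =
        Finsupp.single (RT.deg (Subtype.val : J → ℕ+) t) (M t)) := by
  refine ⟨fdbCoeff lam mu Subtype.val, fun j => ?_, fun j c => ?_,
    map_single_eq_single_fdbCoeff hgen hmor⟩
  · simp [fdbCoeff, rootFactor]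
  · rw [fdbCoeff, rootFactor]
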